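/- Define dstc(sigma) = stc(sigma) + |DNeg(sigma)| for sigma in D_n, where DNeg(sigma) = {i-1 : i in [n], sigma(i) < -1} (equivalently dstc = stc + neg + epsilon, with epsilon(sigma) = -1 if sigma^{-1}(1) < 0 and 0 otherwise). Then sum over sigma in D_n of x^{dstc(sigma)} q^{ell(sigma)} equals sum over sigma in D_n of x^{ddes(sigma)} q^{dmaj(sigma)}, where ddes(sigma) = des(sigma) + |DNeg(sigma)| and dmaj(sigma) = maj(sigma) - sum over i in DNeg(sigma) of sigma(i). -/

import Mathlib

open Finset

/-- Descent set of a word (1-based positions: `i ∈ desSet w` iff `1 ≤ i ≤ n-1` and `w_i > w_{i+1}`). -/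
def desSet {α : Type*} [LinearOrder α] {n : ℕ} (w : Fin n → α) : Finset ℕ :=
  (Finset.Ico 1 n).filter fun i =>
    ∃ h : i < n, w ⟨i, h⟩ < w ⟨i - 1, Nat.lt_of_le_of_lt (Nat.sub_le i 1) h⟩

def desStat {α : Type*} [LinearOrder α] {n : ℕ} (w : Fin n → α) : ℕ := (desSet w).card

def majStat {α : Type*} [LinearOrder α] {n : ℕ} (w : Fin n → α) : ℕ := ∑ i ∈ desSet w, i

def invStat {α : Type*} [LinearOrder α] {n : ℕ} (w : Fin n → α) : ℕ :=
  ((Finset.univ : Finset (Fin n × Fin n)).filter fun p => p.1 < p.2 ∧ w p.2 < w p.1).card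

/-- Lehmer code. -/
def lehmer {α : Type*} [LinearOrder α] {n : ℕ} (w : Fin n → α) (i : Fin n) : ℕ :=
  (Finset.univ.filter fun j => i < j ∧ w j < w i).card

/-- `c` contains a subsequence of length `r` which is entrywise strictly greater than
the staircase `(r-1, r-2, ..., 1, 0)`, i.e. the entry at (1-based) place `k` exceeds `r - k`. -/
def hasStaircase {n : ℕ} (c : Fin n → ℕ) (r : ℕ) : Prop :=
  ∃ f : Fin r → Fin n, StrictMono f ∧ ∀ k : Fin r, r < c (f k) + (k : ℕ) + 1

noncomputable def stcWord {n : ℕ} (c : Fin n → ℕ) : ℕ := sSup {r | hasStaircase c r}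

noncomputable def stcStat {α : Type*} [LinearOrder α] {n : ℕ} (w : Fin n → α) : ℕ := stcWord (lehmer w)

noncomputable abbrev PP := Polynomial (Polynomial ℤ)
noncomputable def xP : PP := Polynomial.X
noncomputable def qP : PP := Polynomial.C Polynomial.X

/-- Number of negative entries of a word. -/
def negStat {n : ℕ} (w : Fin n → ℤ) : ℕ := (Finset.univ.filter fun i => w i < 0).card

/-- Number of negative sum pairs of a word. -/
def nspStat {n : ℕ} (w : Fin n → ℤ) : ℕ :=
  ((Finset.univ : Finset (Fin n × Fin n)).filter fun p => p.1 < p.2 ∧ w p.1 + w p.2 < 0).card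

/-- The hyperoctahedral group `B_n`, encoded as pairs (permutation, signs). -/
abbrev SignedPerm (n : ℕ) := Equiv.Perm (Fin n) × (Fin n → Bool)

/-- The window `σ(1) ⋯ σ(n) ∈ {±1, …, ±n}ⁿ` of a signed permutation. -/
def sgnWord {n : ℕ} (σ : SignedPerm n) : Fin n → ℤ :=
  fun i => if σ.2 i then -((σ.1 i : ℤ) + 1) else (σ.1 i : ℤ) + 1

/-- The type `B` Coxeter length, via its combinatorial description
`ℓ(σ) = inv(σ) + neg(σ) + nsp(σ)`. -/
def lenB {n : ℕ} (σ : SignedPerm n) : ℕ :=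
  invStat (sgnWord σ) + negStat (sgnWord σ) + nspStat (sgnWord σ)

/-- `nstc(σ) = stc(σ) + neg(σ)`; here `stc` of a signed permutation is Skandera's
statistic of its window (equivalently, of the ordinary permutation with the same
relative order of values, since the Lehmer code only depends on relative order). -/
noncomputable def nstc {n : ℕ} (σ : SignedPerm n) : ℕ :=
  stcStat (sgnWord σ) + negStat (sgnWord σ)

/-- `ndes(σ) = des(σ) + neg(σ)`. -/
def ndes {n : ℕ} (σ : SignedPerm n) : ℕ := desStat (sgnWord σ) + negStat (sgnWord σ)

/-- `nmaj(σ) = maj(σ) - ∑_{i ∈ Neg σ} σ(i)`. -/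
def nmaj {n : ℕ} (σ : SignedPerm n) : ℕ :=
  majStat (sgnWord σ) +
    ∑ i ∈ Finset.univ.filter (fun i : Fin n => sgnWord σ i < 0), (sgnWord σ i).natAbs

/-- The even hyperoctahedral group `D_n ⊆ B_n`. -/
def evenSigned (n : ℕ) : Finset (SignedPerm n) :=
  Finset.univ.filter fun σ => Even (negStat (sgnWord σ))

/-- `DNeg(σ) = {i - 1 : i ∈ [n], σ(i) < -1}`; its cardinality is the number of
positions with value `< -1`. -/
def dnegSet {n : ℕ} (σ : SignedPerm n) : Finset (Fin n) :=
  Finset.univ.filter fun i => sgnWord σ i < -1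

/-- The type `D` Coxeter length, via its combinatorial description
`ℓ(σ) = inv(σ) + nsp(σ)`. -/
def lenD {n : ℕ} (σ : SignedPerm n) : ℕ := invStat (sgnWord σ) + nspStat (sgnWord σ)

/-- `dstc(σ) = stc(σ) + |DNeg(σ)|`. -/
noncomputable def dstc {n : ℕ} (σ : SignedPerm n) : ℕ :=
  stcStat (sgnWord σ) + (dnegSet σ).card

/-- `ddes(σ) = des(σ) + |DNeg(σ)|`. -/
def ddes {n : ℕ} (σ : SignedPerm n) : ℕ := desStat (sgnWord σ) + (dnegSet σ).card

/-- Biagioli's `dmaj(σ) = maj(σ) - ∑_{i ∈ DNeg(σ)} σ(i)` (each value `σ(i) < -1`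
contributing `|σ(i)| - 1 = -(σ(i) + 1)`, the shift by one accounting for the
`i - 1` in the definition of `DNeg`). -/
def dmaj {n : ℕ} (σ : SignedPerm n) : ℕ :=
  majStat (sgnWord σ) + ∑ i ∈ dnegSet σ, ((sgnWord σ i).natAbs - 1)

/-!
A signed permutation `σ ∈ D_n` is determined by its standardization `s ∈ S_n` and by the set `A`
of values `|σ(i)| - 1` carried by its negative entries, `|A|` even. The statistics `stc`, `inv`,
`des`, `maj` of `σ` are those of `s`, while `|DNeg σ|` and `∑_{i ∈ DNeg σ} (|σ(i)| - 1)` depend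
only on `A`; the latter is also `nsp σ`, so `ℓ_D = inv + nsp` has the same shape as `dmaj`.
For each `A` the claim thus reduces to Skandera's equidistribution of `(stc, inv)` and
`(des, maj)` on `S_n`, proved by induction on `n`: prepending a letter `v` to the Lehmer code, and
inserting a new maximum into each of the `n + 1` slots, both turn a pair of values `(d, m)` into
the pairs `(d + [d < v], m + v)`, `v = 0, …, n`.
-/

section RelativeOrder

variable {α β : Type*} [LinearOrder α] [LinearOrder β] {n : ℕ}

lemma desSet_eq_of_lt_iff {w : Fin n → α} {w' : Fin n → β}
    (h : ∀ i j, w i < w j ↔ w' i < w' j) : desSet w = desSet w' :=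
  filter_congr fun _ _ => exists_congr fun _ => h _ _

lemma lehmer_eq_of_lt_iff {w : Fin n → α} {w' : Fin n → β}
    (h : ∀ i j, w i < w j ↔ w' i < w' j) : lehmer w = lehmer w' :=
  funext fun i => congrArg card <| filter_congr fun j _ => and_congr_right fun _ => h j i

lemma desStat_eq_of_lt_iff {w : Fin n → α} {w' : Fin n → β}
    (h : ∀ i j, w i < w j ↔ w' i < w' j) : desStat w = desStat w' :=
  congrArg card (desSet_eq_of_lt_iff h)

lemma majStat_eq_of_lt_iff {w : Fin n → α} {w' : Fin n → β}
    (h : ∀ i j, w i < w j ↔ w' i < w' j) : majStat w = majStat w' :=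
  congrArg (∑ i ∈ ·, i) (desSet_eq_of_lt_iff h)

lemma stcStat_eq_of_lt_iff {w : Fin n → α} {w' : Fin n → β}
    (h : ∀ i j, w i < w j ↔ w' i < w' j) : stcStat w = stcStat w' :=
  congrArg stcWord (lehmer_eq_of_lt_iff h)

lemma invStat_eq_of_lt_iff {w : Fin n → α} {w' : Fin n → β}
    (h : ∀ i j, w i < w j ↔ w' i < w' j) : invStat w = invStat w' :=
  congrArg card <| filter_congr fun p _ => and_congr_right fun _ => h p.2 p.1

lemma invStat_eq_sum_lehmer (w : Fin n → α) : invStat w = ∑ i, lehmer w i := by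
  rw [invStat, card_filter, Fintype.sum_prod_type]
  exact sum_congr rfl fun i _ => (card_filter _ _).symm

noncomputable def standardize (w : Fin n → α) : Equiv.Perm (Fin n) := (Tuple.sort w).symm

lemma standardize_lt_standardize_iff {w : Fin n → α} (hw : Function.Injective w) (i j : Fin n) :
    standardize w i < standardize w j ↔ w i < w j := by
  have hmono : StrictMono (w ∘ Tuple.sort w) :=
    (Tuple.monotone_sort w).strictMono_of_injective (hw.comp (Tuple.sort w).injective)
  simpa [standardize] using (hmono.lt_iff_lt (a := (Tuple.sort w).symm i)
    (b := (Tuple.sort w).symm j)).symm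

lemma eq_of_range_eq_of_lt_iff {w w' : Fin n → α} (hw : Function.Injective w)
    (hrange : Set.range w = Set.range w') (h : ∀ i j, w i < w j ↔ w' i < w' j) : w = w' := by
  set e := Tuple.sort w
  have hmono : StrictMono (w ∘ e) :=
    (Tuple.monotone_sort w).strictMono_of_injective (hw.comp e.injective)
  have hmono' : StrictMono (w' ∘ e) := fun a b hab => (h _ _).mp (hmono hab)
  have : w ∘ e = w' ∘ e := (hmono.range_inj hmono').mp <| by
    rw [Set.range_comp, Set.range_comp, e.range_eq_univ, Set.image_univ, Set.image_univ, hrange]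
  funext i
  simpa using congrFun this (e.symm i)

end RelativeOrder

section Staircase

variable {n : ℕ}

lemma hasStaircase_zero (c : Fin n → ℕ) : hasStaircase c 0 :=
  ⟨Fin.elim0, fun a => a.elim0, fun k => k.elim0⟩

lemma hasStaircase.le {c : Fin n → ℕ} {r : ℕ} (h : hasStaircase c r) : r ≤ n := by
  obtain ⟨f, hf, -⟩ := h
  simpa using Fintype.card_le_of_injective f hf.injective

lemma bddAbove_hasStaircase (c : Fin n → ℕ) : BddAbove {r | hasStaircase c r} :=
  ⟨n, fun _ hr => hasStaircase.le hr⟩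

lemma hasStaircase_stcWord (c : Fin n → ℕ) : hasStaircase c (stcWord c) :=
  Nat.sSup_mem ⟨0, hasStaircase_zero c⟩ (bddAbove_hasStaircase c)

lemma le_stcWord {c : Fin n → ℕ} {r : ℕ} (h : hasStaircase c r) : r ≤ stcWord c :=
  le_csSup (bddAbove_hasStaircase c) h

lemma stcWord_le {c : Fin n → ℕ} {s : ℕ} (h : ∀ r, hasStaircase c r → r ≤ s) :
    stcWord c ≤ s :=
  csSup_le ⟨0, hasStaircase_zero c⟩ h

lemma exists_strictMono_succ_of_ne_zero {m : ℕ} {f : Fin m → Fin (n + 1)} (hf : StrictMono f)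
    (h0 : ∀ k, f k ≠ 0) : ∃ g : Fin m → Fin n, StrictMono g ∧ ∀ k, f k = (g k).succ :=
  ⟨fun k => (f k).pred (h0 k), fun _ _ hab => Fin.pred_lt_pred_iff.mpr (hf hab),
    fun _ => (Fin.succ_pred _ _).symm⟩

lemma hasStaircase.cons {c : Fin n → ℕ} {r : ℕ} (h : hasStaircase c r) (v : ℕ) :
    hasStaircase (Fin.cons v c) r := by
  obtain ⟨f, hf, hc⟩ := h
  exact ⟨Fin.succ ∘ f, (Fin.strictMono_succ).comp hf, by simpa using hc⟩

lemma hasStaircase.cons_succ {c : Fin n → ℕ} {r v : ℕ} (h : hasStaircase c r) (hv : r < v) :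
    hasStaircase (Fin.cons v c) (r + 1) := by
  obtain ⟨f, hf, hc⟩ := h
  refine ⟨Fin.cons 0 (Fin.succ ∘ f), fun a b hab => ?_, fun k => ?_⟩
  · cases b using Fin.cases with
    | zero => exact absurd hab (Fin.not_lt_zero a)
    | succ b => cases a using Fin.cases with
      | zero => exact Fin.succ_pos _
      | succ a => simpa using hf (Fin.succ_lt_succ_iff.mp hab)
  · cases k using Fin.cases with
    | zero => simpa using hv
    | succ k =>
      have := hc k
      simp only [Fin.cons_succ, Function.comp_apply, Fin.val_succ]
      omega

lemma hasStaircase.of_cons {c : Fin n → ℕ} {r v : ℕ} (h : hasStaircase (Fin.cons v c) (r + 1)) :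
    (r < v ∧ hasStaircase c r) ∨ hasStaircase c (r + 1) := by
  obtain ⟨f, hf, hc⟩ := h
  by_cases h0 : f 0 = 0
  · have hne : ∀ k : Fin r, f k.succ ≠ 0 := fun k hk =>
      (hf (Fin.succ_pos k)).ne (h0.trans hk.symm)
    obtain ⟨g, hg, hfg⟩ := exists_strictMono_succ_of_ne_zero (hf.comp (Fin.strictMono_succ)) hne
    refine Or.inl ⟨by simpa [h0] using hc 0, g, hg, fun k => ?_⟩
    have := hc k.succ
    rw [show f k.succ = (g k).succ from hfg k, Fin.cons_succ, Fin.val_succ] at this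
    omega
  · have hne : ∀ k, f k ≠ 0 := fun k hk =>
      h0 (le_antisymm (hk ▸ hf.monotone (Fin.zero_le k)) (Fin.zero_le _))
    obtain ⟨g, hg, hfg⟩ := exists_strictMono_succ_of_ne_zero hf hne
    exact Or.inr ⟨g, hg, fun k => by simpa [hfg k] using hc k⟩

lemma stcWord_cons (v : ℕ) (c : Fin n → ℕ) :
    stcWord (Fin.cons v c) = stcWord c + if stcWord c < v then 1 else 0 := by
  have hs := hasStaircase_stcWord c
  refine le_antisymm (stcWord_le fun r hr => ?_) ?_
  · rcases r with _ | r
    · exact Nat.zero_le _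
    rcases hr.of_cons with ⟨hrv, hr⟩ | hr <;> have := le_stcWord hr <;> split_ifs <;> omega
  · split_ifs with hv
    · exact le_stcWord (hs.cons_succ hv)
    · simpa using le_stcWord (hs.cons v)

end Staircase

section Permutations

variable {α : Type*} [LinearOrder α] {n : ℕ}

lemma card_filter_perm_lt (τ : Equiv.Perm (Fin n)) (a : Fin n) : #{i | τ i < a} = a := by
  rw [card_filter, Equiv.sum_comp τ (fun j => if j < a then 1 else 0), ← card_filter,
    filter_gt_eq_Iio, Fin.card_Iio]

lemma lehmer_perm_zero (σ : Equiv.Perm (Fin (n + 1))) : lehmer σ 0 = σ 0 := by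
  rw [lehmer, ← card_filter_perm_lt σ (σ 0)]
  refine congrArg card (filter_congr fun j _ => and_iff_right_of_imp fun hj => ?_)
  exact Fin.pos_iff_ne_zero.mpr fun h => (h ▸ hj).false

lemma lehmer_succ (w : Fin (n + 1) → α) (i : Fin n) :
    lehmer w i.succ = lehmer (fun j => w j.succ) i := by
  simp [lehmer, Fin.card_filter_univ_succ]

noncomputable def consPerm (v : Fin (n + 1)) (τ : Equiv.Perm (Fin n)) :
    Equiv.Perm (Fin (n + 1)) :=
  Equiv.ofBijective (Fin.cons v (v.succAbove ∘ τ) : Fin (n + 1) → Fin (n + 1)) <|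
    Finite.injective_iff_bijective.mp <| Fin.cons_injective_iff.mpr
      ⟨fun ⟨i, hi⟩ => Fin.succAbove_ne v (τ i) hi,
        (Fin.succAbove_right_injective).comp τ.injective⟩

lemma consPerm_injective :
    Function.Injective fun p : Fin (n + 1) × Equiv.Perm (Fin n) => consPerm p.1 p.2 := by
  rintro ⟨v, τ⟩ ⟨v', τ'⟩ h
  have h' := congrArg (⇑) h
  simp only [consPerm, Equiv.coe_ofBijective, Fin.cons_inj] at h'
  obtain ⟨rfl, hτ⟩ := h'
  exact Prod.ext rfl (Equiv.ext fun i => Fin.succAbove_right_injective (congrFun hτ i))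

lemma lehmer_consPerm (v : Fin (n + 1)) (τ : Equiv.Perm (Fin n)) :
    lehmer (consPerm v τ) = Fin.cons (v : ℕ) (lehmer τ) := by
  funext i
  cases i using Fin.cases with
  | zero => rw [lehmer_perm_zero]; rfl
  | succ i =>
    rw [lehmer_succ, Fin.cons_succ]
    exact congrFun (lehmer_eq_of_lt_iff fun j k => by
      simp [consPerm, (Fin.strictMono_succAbove v).lt_iff_lt]) i

lemma stcStat_consPerm (v : Fin (n + 1)) (τ : Equiv.Perm (Fin n)) :
    stcStat (consPerm v τ) = stcStat τ + if stcStat τ < v then 1 else 0 := by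
  rw [stcStat, lehmer_consPerm, stcWord_cons, stcStat]

lemma invStat_consPerm (v : Fin (n + 1)) (τ : Equiv.Perm (Fin n)) :
    invStat (consPerm v τ) = invStat τ + v := by
  rw [invStat_eq_sum_lehmer, invStat_eq_sum_lehmer, lehmer_consPerm, Fin.sum_cons, add_comm]

lemma sum_perm_succ_of_injective {M : Type*} [AddCommMonoid M]
    {e : Fin (n + 1) × Equiv.Perm (Fin n) → Equiv.Perm (Fin (n + 1))} (he : Function.Injective e)
    (F : Equiv.Perm (Fin (n + 1)) → M) :
    ∑ σ, F σ = ∑ τ : Equiv.Perm (Fin n), ∑ p : Fin (n + 1), F (e (p, τ)) := by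
  have hbij : Function.Bijective e := (Fintype.bijective_iff_injective_and_card e).mpr
    ⟨he, by simp [Fintype.card_perm, Nat.factorial_succ]⟩
  rw [← Fintype.sum_bijective e hbij _ _ fun _ => rfl, Fintype.sum_prod_type_right]

end Permutations

section Rank

variable {α M : Type*} [LinearOrder α] [AddCommMonoid M]

/-- Ranking the elements of `S` is a bijection from `S` onto `{1, …, #S}`. -/
lemma sum_card_filter_le (S : Finset α) (F : ℕ → M) :
    ∑ p ∈ S, F #{x ∈ S | x ≤ p} = ∑ i ∈ range #S, F (i + 1) := by
  induction S using Finset.induction_on_max with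
  | empty => simp
  | insert a S ha ih =>
    have haS : a ∉ S := fun h => (ha a h).false
    have hrank : ∀ p ∈ S, #{x ∈ insert a S | x ≤ p} = #{x ∈ S | x ≤ p} := fun p hp => by
      rw [filter_insert, if_neg (ha p hp).not_ge]
    have htop : #{x ∈ insert a S | x ≤ a} = #S + 1 := by
      rw [filter_true_of_mem fun x hx => (mem_insert.mp hx).elim le_of_eq fun h => (ha x h).le,
        card_insert_of_notMem haS]
    rw [sum_insert haS, sum_congr rfl fun p hp => congrArg F (hrank p hp), ih, htop,
      card_insert_of_notMem haS, sum_range_succ, add_comm]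

lemma sum_card_filter_ge (S : Finset α) (F : ℕ → M) :
    ∑ p ∈ S, F #{x ∈ S | p ≤ x} = ∑ i ∈ range #S, F (i + 1) :=
  sum_card_filter_le (α := αᵒᵈ) S F

end Rank

section InsertNth

variable {α : Type*} {n : ℕ} {p : Fin (n + 1)} {x : α} {u : Fin n → α} {i : ℕ}

lemma insertNth_apply_mk_of_lt (h : i < n + 1) (hi : i < p) :
    (Fin.insertNth p x u : Fin (n + 1) → α) ⟨i, h⟩ = u ⟨i, by omega⟩ := by
  have : p.succAbove ⟨i, by omega⟩ = ⟨i, h⟩ := Fin.succAbove_of_castSucc_lt _ _ hi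
  rw [← this, Fin.insertNth_apply_succAbove]

lemma insertNth_apply_mk_of_eq (h : i < n + 1) (hi : i = p) :
    (Fin.insertNth p x u : Fin (n + 1) → α) ⟨i, h⟩ = x := by
  rw [show (⟨i, h⟩ : Fin (n + 1)) = p from Fin.ext hi, Fin.insertNth_apply_same]

lemma insertNth_apply_mk_of_gt (h : i < n + 1) (hi : p < i) :
    (Fin.insertNth p x u : Fin (n + 1) → α) ⟨i, h⟩ = u ⟨i - 1, by omega⟩ := by
  have : p.succAbove ⟨i - 1, by omega⟩ = ⟨i, h⟩ := by
    rw [Fin.succAbove_of_le_castSucc _ _ (Fin.le_def.mpr (by simp only [Fin.val_castSucc]; omega))]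
    ext
    simp only [Fin.val_succ]
    omega
  rw [← this, Fin.insertNth_apply_succAbove]

lemma insertNth_injective {f : Fin n → α} (hf : Function.Injective f) (hx : ∀ j, f j ≠ x) :
    Function.Injective (Fin.insertNth p x f : Fin (n + 1) → α) := by
  intro a b h
  rcases Fin.eq_self_or_eq_succAbove p a with ha | ⟨a, rfl⟩ <;>
    rcases Fin.eq_self_or_eq_succAbove p b with hb | ⟨b, rfl⟩
  · rw [ha, hb]
  · subst ha
    simp only [Fin.insertNth_apply_same, Fin.insertNth_apply_succAbove] at h
    exact absurd h.symm (hx b)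
  · subst hb
    simp only [Fin.insertNth_apply_same, Fin.insertNth_apply_succAbove] at h
    exact absurd h (hx a)
  · simp only [Fin.insertNth_apply_succAbove] at h
    rw [hf h]

end InsertNth

section InsertMax

variable {α : Type*} [LinearOrder α] {n : ℕ} {p : Fin (n + 1)} {x : α} {u : Fin n → α}

lemma desSet_subset_Ico (w : Fin n → α) : desSet w ⊆ Ico 1 n := filter_subset _ _

lemma mem_desSet {w : Fin n → α} {i : ℕ} :
    i ∈ desSet w ↔ 1 ≤ i ∧ ∃ h : i < n, w ⟨i, h⟩ < w ⟨i - 1, by omega⟩ := by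
  simp only [desSet, mem_filter, mem_Ico]
  exact ⟨fun ⟨⟨h1, _⟩, h⟩ => ⟨h1, h⟩, fun ⟨h1, h, hw⟩ => ⟨⟨h1, h⟩, h, hw⟩⟩

lemma mem_desSet_insertNth_of_forall_lt {i : ℕ} (hx : ∀ j, u j < x) :
    i ∈ desSet (Fin.insertNth p x u : Fin (n + 1) → α) ↔
      (i < p ∧ i ∈ desSet u) ∨ (i = p + 1 ∧ (p : ℕ) < n) ∨ (p + 1 < i ∧ i - 1 ∈ desSet u) := by
  simp only [mem_desSet]
  rcases lt_or_ge i p with hi | hi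
  · constructor
    · rintro ⟨h1, h, hw⟩
      rw [insertNth_apply_mk_of_lt h hi, insertNth_apply_mk_of_lt _ (by omega)] at hw
      exact Or.inl ⟨hi, h1, by omega, hw⟩
    · rintro (⟨-, h1, h, hw⟩ | ⟨h, -⟩ | ⟨h, -⟩) <;> try omega
      exact ⟨h1, by omega, by
        rwa [insertNth_apply_mk_of_lt _ hi, insertNth_apply_mk_of_lt _ (by omega)]⟩
  rcases hi.eq_or_lt with hi | hi
  · refine iff_of_false (fun ⟨h1, h, hw⟩ => ?_) (by omega)
    rw [insertNth_apply_mk_of_eq h hi.symm, insertNth_apply_mk_of_lt _ (by omega)] at hw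
    exact (hw.trans (hx _)).false
  rcases (Nat.succ_le_of_lt hi).eq_or_lt with hi' | hi'
  · subst hi'
    refine ⟨fun ⟨_, h, _⟩ => Or.inr (Or.inl ⟨rfl, by omega⟩), fun h => ?_⟩
    have hp : (p : ℕ) < n := by omega
    refine ⟨by omega, by omega, ?_⟩
    rw [insertNth_apply_mk_of_gt _ hi, insertNth_apply_mk_of_eq _ (by simp)]
    exact hx _
  · constructor
    · rintro ⟨-, h, hw⟩
      rw [insertNth_apply_mk_of_gt h hi, insertNth_apply_mk_of_gt _ (by omega)] at hw
      exact Or.inr (Or.inr ⟨hi', by omega, by omega, by convert hw using 3⟩)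
    · rintro (⟨h, -⟩ | ⟨h, -⟩ | ⟨-, h1, h, hw⟩) <;> try omega
      refine ⟨by omega, by omega, ?_⟩
      rw [insertNth_apply_mk_of_gt _ hi, insertNth_apply_mk_of_gt _ (by omega)]
      convert hw using 3

lemma desSet_insertNth_of_forall_lt (hx : ∀ j, u j < x) :
    desSet (Fin.insertNth p x u : Fin (n + 1) → α) =
      (desSet u).image (fun i : ℕ => if i < p then i else i + 1) ∪
        if (p : ℕ) < n ∧ (p : ℕ) ∉ desSet u then {(p : ℕ) + 1} else ∅ := by
  have hD : ∀ i ∈ desSet u, 1 ≤ i ∧ i < n := fun i hi => mem_Ico.mp (desSet_subset_Ico u hi)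
  ext i
  rw [mem_desSet_insertNth_of_forall_lt hx, mem_union, mem_image]
  constructor
  · rintro (⟨hi, hiD⟩ | ⟨rfl, hp⟩ | ⟨hi, hiD⟩)
    · exact Or.inl ⟨i, hiD, if_pos hi⟩
    · by_cases hpD : (p : ℕ) ∈ desSet u
      · exact Or.inl ⟨p, hpD, by simp⟩
      · exact Or.inr (by simp [hp, hpD])
    · exact Or.inl ⟨i - 1, hiD, by rw [if_neg (by omega)]; omega⟩
  · rintro (⟨j, hj, rfl⟩ | h)
    · have := hD j hj
      split_ifs with hjp
      · exact Or.inl ⟨hjp, hj⟩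
      · rcases (not_lt.mp hjp).eq_or_lt with hjp | hjp
        · exact Or.inr (Or.inl ⟨by omega, by omega⟩)
        · exact Or.inr (Or.inr ⟨by omega, by simpa using hj⟩)
    · split_ifs at h with hp
      · exact Or.inr (Or.inl ⟨mem_singleton.mp h, hp.1⟩)
      · exact absurd h (notMem_empty i)

lemma shift_injective (p : ℕ) : Function.Injective fun i : ℕ => if i < p then i else i + 1 := by
  intro a b h
  dsimp only at h
  split_ifs at h <;> omega

lemma succ_notMem_image_shift {D : Finset ℕ} {p : ℕ} (hp : p ∉ D) :
    p + 1 ∉ D.image fun i : ℕ => if i < p then i else i + 1 := by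
  simp only [mem_image, not_exists, not_and]
  intro j hj
  split_ifs <;> intro h <;> [omega; exact hp (by rwa [← Nat.succ_injective h])]

lemma desStat_insertNth_of_forall_lt (hx : ∀ j, u j < x) :
    desStat (Fin.insertNth p x u : Fin (n + 1) → α) =
      desStat u + if (p : ℕ) < n ∧ (p : ℕ) ∉ desSet u then 1 else 0 := by
  rw [desStat, desStat, desSet_insertNth_of_forall_lt hx]
  split_ifs with hp
  · rw [card_union_of_disjoint (disjoint_singleton_right.mpr (succ_notMem_image_shift hp.2)),
      card_image_of_injective _ (shift_injective p), card_singleton]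
  · rw [union_empty, card_image_of_injective _ (shift_injective p), add_zero]

lemma majStat_insertNth_of_forall_lt (hx : ∀ j, u j < x) :
    majStat (Fin.insertNth p x u : Fin (n + 1) → α) =
      majStat u + #{i ∈ desSet u | (p : ℕ) ≤ i} +
        if (p : ℕ) < n ∧ (p : ℕ) ∉ desSet u then (p : ℕ) + 1 else 0 := by
  have hshift : ∑ i ∈ (desSet u).image (fun i : ℕ => if i < p then i else i + 1), i =
      majStat u + #{i ∈ desSet u | (p : ℕ) ≤ i} := by
    rw [sum_image fun a _ b _ h => shift_injective p h, majStat, card_filter, ← sum_add_distrib]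
    exact sum_congr rfl fun i _ => by split_ifs <;> omega
  rw [majStat, desSet_insertNth_of_forall_lt hx]
  split_ifs with hp
  · rw [sum_union (disjoint_singleton_right.mpr (succ_notMem_image_shift hp.2)), hshift,
      sum_singleton]
  · rw [union_empty, hshift, add_zero]

end InsertMax

section Slots

variable {M : Type*} [AddCommMonoid M]

/-- Inserting a new maximum into the `n + 1` slots of a permutation with descent set `D`
raises `maj` by each of `0, …, n` exactly once, and raises `des` exactly when the increment
exceeds `des`. -/
lemma sum_range_insertion_slots {n : ℕ} {D : Finset ℕ} (hD : D ⊆ Ico 1 n) (m : ℕ)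
    (F : ℕ → ℕ → M) :
    ∑ p ∈ range (n + 1), F (#D + if p < n ∧ p ∉ D then 1 else 0)
        (m + #{i ∈ D | p ≤ i} + if p < n ∧ p ∉ D then p + 1 else 0) =
      ∑ v ∈ range (n + 1), F (#D + if #D < v then 1 else 0) (m + v) := by
  have hDn : D ⊆ range n := fun i hi => mem_range.mpr (mem_Ico.mp (hD hi)).2
  have hd : #D ≤ n := by simpa using card_le_card hDn
  set N := range n \ D with hN
  have hlast : #{i ∈ D | n ≤ i} = 0 :=
    card_eq_zero.mpr (filter_false_of_mem fun i hi => by simpa using mem_range.mp (hDn hi))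
  have hdesc : ∑ p ∈ D, F (#D + if p < n ∧ p ∉ D then 1 else 0)
        (m + #{i ∈ D | p ≤ i} + if p < n ∧ p ∉ D then p + 1 else 0) =
      ∑ i ∈ range #D, F #D (m + (i + 1)) := by
    rw [← sum_card_filter_ge D fun k => F #D (m + k)]
    exact sum_congr rfl fun p hp => by simp [hp]
  have hasc : ∑ p ∈ N, F (#D + if p < n ∧ p ∉ D then 1 else 0)
        (m + #{i ∈ D | p ≤ i} + if p < n ∧ p ∉ D then p + 1 else 0) =
      ∑ i ∈ range (n - #D), F (#D + 1) (m + #D + (i + 1)) := by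
    rw [show n - #D = #N by rw [hN, card_sdiff_of_subset hDn, card_range],
      ← sum_card_filter_le N fun k => F (#D + 1) (m + #D + k)]
    refine sum_congr rfl fun p hp => ?_
    obtain ⟨hpn, hpD⟩ := mem_sdiff.mp hp
    rw [mem_range] at hpn
    have hsplitD : #{x ∈ D | x ≤ p} + #{x ∈ D | p ≤ x} = #D := by
      rw [← card_filter_add_card_filter_not (s := D) (· ≤ p)]
      exact congrArg _ (congrArg card (filter_congr fun x hx => by
        have : x ≠ p := fun h => hpD (h ▸ hx)
        constructor <;> intro <;> omega))
    have hsplitN : #{x ∈ D | x ≤ p} + #{x ∈ N | x ≤ p} = p + 1 := by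
      rw [card_filter, card_filter, add_comm, sum_sdiff hDn, ← card_filter,
        show {x ∈ range n | x ≤ p} = range (p + 1) by ext; simp; omega, card_range]
    rw [if_pos ⟨hpn, hpD⟩, if_pos ⟨hpn, hpD⟩]
    congr 1
    omega
  have hrhs : ∑ v ∈ range (n + 1), F (#D + if #D < v then 1 else 0) (m + v) =
      ∑ i ∈ range (n - #D), F (#D + 1) (m + #D + (i + 1)) +
        (∑ i ∈ range #D, F #D (m + (i + 1)) + F #D m) := by
    rw [show n + 1 = (#D + 1) + (n - #D) by omega, sum_range_add, sum_range_succ', add_comm]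
    congr 1
    · exact sum_congr rfl fun i _ => by rw [if_pos (by omega)]; congr 1; omega
    · congr 1
      exact sum_congr rfl fun i hi => by rw [if_neg (by simp at hi; omega), add_zero]
  rw [hrhs, sum_range_succ, ← sum_sdiff hDn, hasc, hdesc, hlast]
  simp [add_assoc]

end Slots

section Skandera

variable {n : ℕ}

noncomputable def insertMaxPerm (p : Fin (n + 1)) (τ : Equiv.Perm (Fin n)) :
    Equiv.Perm (Fin (n + 1)) :=
  Equiv.ofBijective (Fin.insertNth p (Fin.last n) (Fin.castSucc ∘ τ) : Fin (n + 1) → Fin (n + 1)) <|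
    Finite.injective_iff_bijective.mp <| insertNth_injective
      ((Fin.castSucc_injective n).comp τ.injective) fun _ => (Fin.castSucc_lt_last _).ne

lemma insertMaxPerm_injective :
    Function.Injective fun p : Fin (n + 1) × Equiv.Perm (Fin n) => insertMaxPerm p.1 p.2 := by
  rintro ⟨p, τ⟩ ⟨p', τ'⟩ h
  have h' : (Fin.insertNth p (Fin.last n) (Fin.castSucc ∘ τ) : Fin (n + 1) → Fin (n + 1)) =
      Fin.insertNth p' (Fin.last n) (Fin.castSucc ∘ τ') := congrArg (⇑) h
  obtain rfl : p = p' := by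
    rcases Fin.eq_self_or_eq_succAbove p' p with hp | ⟨j, hj⟩
    · exact hp
    · have := congrFun h' p
      rw [Fin.insertNth_apply_same, hj, Fin.insertNth_apply_succAbove] at this
      exact absurd this.symm (Fin.castSucc_lt_last _).ne
  obtain ⟨-, hτ⟩ := Fin.insertNth_inj.mp h'
  exact Prod.ext rfl (Equiv.ext fun i => Fin.castSucc_injective n (congrFun hτ i))

lemma desSet_castSucc_comp (τ : Equiv.Perm (Fin n)) : desSet (Fin.castSucc ∘ τ) = desSet τ :=
  desSet_eq_of_lt_iff fun _ _ => Fin.castSucc_lt_castSucc_iff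

lemma desStat_insertMaxPerm (p : Fin (n + 1)) (τ : Equiv.Perm (Fin n)) :
    desStat (insertMaxPerm p τ) =
      desStat τ + if (p : ℕ) < n ∧ (p : ℕ) ∉ desSet τ then 1 else 0 := by
  have := desStat_insertNth_of_forall_lt (p := p) (u := Fin.castSucc ∘ τ) (x := Fin.last n)
    fun _ => Fin.castSucc_lt_last _
  rwa [desStat, desSet_castSucc_comp, ← desStat] at this

lemma majStat_insertMaxPerm (p : Fin (n + 1)) (τ : Equiv.Perm (Fin n)) :
    majStat (insertMaxPerm p τ) =
      majStat τ + #{i ∈ desSet τ | (p : ℕ) ≤ i} +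
        if (p : ℕ) < n ∧ (p : ℕ) ∉ desSet τ then (p : ℕ) + 1 else 0 := by
  have := majStat_insertNth_of_forall_lt (p := p) (u := Fin.castSucc ∘ τ) (x := Fin.last n)
    fun _ => Fin.castSucc_lt_last _
  rwa [majStat, desSet_castSucc_comp, ← majStat] at this

/-- Skandera's theorem. -/
theorem sum_stcStat_invStat_eq_sum_desStat_majStat {M : Type*} [AddCommMonoid M] (n : ℕ)
    (F : ℕ → ℕ → M) :
    ∑ τ : Equiv.Perm (Fin n), F (stcStat τ) (invStat τ) =
      ∑ τ : Equiv.Perm (Fin n), F (desStat τ) (majStat τ) := by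
  induction n generalizing F with
  | zero =>
    refine sum_congr rfl fun τ _ => ?_
    have hstc : stcStat τ = 0 := Nat.le_zero.mp (stcWord_le fun _ hr => hr.le)
    simp [hstc, invStat, desStat, majStat, desSet]
  | succ n ih =>
    let G d m := ∑ v ∈ range (n + 1), F (d + if d < v then 1 else 0) (m + v)
    calc ∑ σ : Equiv.Perm (Fin (n + 1)), F (stcStat σ) (invStat σ)
        = ∑ τ : Equiv.Perm (Fin n), G (stcStat τ) (invStat τ) := by
          rw [sum_perm_succ_of_injective consPerm_injective]
          refine sum_congr rfl fun τ _ => ?_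
          simp only [stcStat_consPerm, invStat_consPerm, G]
          rw [← Fin.sum_univ_eq_sum_range]
      _ = ∑ τ : Equiv.Perm (Fin n), G (desStat τ) (majStat τ) := ih G
      _ = ∑ σ : Equiv.Perm (Fin (n + 1)), F (desStat σ) (majStat σ) := by
          rw [sum_perm_succ_of_injective insertMaxPerm_injective]
          refine sum_congr rfl fun τ _ => ?_
          simp only [desStat_insertMaxPerm, majStat_insertMaxPerm, G]
          rw [desStat, ← sum_range_insertion_slots (desSet_subset_Ico _),
            ← Fin.sum_univ_eq_sum_range]

end Skandera

section Pairs

variable {α β : Type*} [Fintype α] [DecidableEq α] [LinearOrder β]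

lemma two_mul_card_filter_lt_and {k : α → β} (hk : Function.Injective k) (R : α → α → Prop)
    [DecidableRel R] (hR : ∀ a b, R a b → R b a) :
    2 * #{p : α × α | k p.1 < k p.2 ∧ R p.1 p.2} = #{p : α × α | p.1 ≠ p.2 ∧ R p.1 p.2} := by
  have hswap : #{p : α × α | k p.2 < k p.1 ∧ R p.1 p.2} =
      #{p : α × α | k p.1 < k p.2 ∧ R p.1 p.2} :=
    card_equiv (Equiv.prodComm α α) fun p => by
      simp only [mem_filter, mem_univ, true_and, Equiv.prodComm_apply, Prod.fst_swap,
        Prod.snd_swap]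
      exact and_congr_right fun _ => ⟨hR _ _, hR _ _⟩
  rw [two_mul]
  nth_rw 2 [← hswap]
  rw [← card_union_of_disjoint (disjoint_filter.mpr fun p _ h h' => lt_asymm h.1 h'.1),
    ← filter_or]
  refine congrArg card (filter_congr fun p _ => ?_)
  rw [← or_and_right, ← ne_iff_lt_or_gt, hk.ne_iff]

end Pairs

section SignedPerm

variable {n : ℕ}

/-- `a ∈ negValues σ` iff the entry of absolute value `a + 1` in the window of `σ` is negative. -/
def negValues (σ : SignedPerm n) : Finset (Fin n) := {a | σ.2 (σ.1.symm a)}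

def signedVal (A : Finset (Fin n)) (a : Fin n) : ℤ :=
  if a ∈ A then -((a : ℤ) + 1) else (a : ℤ) + 1

lemma sgnWord_eq_signedVal_comp (σ : SignedPerm n) :
    sgnWord σ = signedVal (negValues σ) ∘ σ.1 := by
  funext i
  simp [sgnWord, signedVal, negValues]

lemma natAbs_sgnWord (σ : SignedPerm n) (i : Fin n) : (sgnWord σ i).natAbs = σ.1 i + 1 := by
  unfold sgnWord
  split_ifs <;> omega

lemma signedVal_injective (A : Finset (Fin n)) : Function.Injective (signedVal A) := by
  intro a b h
  have := congrArg Int.natAbs h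
  simp only [signedVal] at this
  split_ifs at this <;> exact Fin.ext (by omega)

lemma sgnWord_injective (σ : SignedPerm n) : Function.Injective (sgnWord σ) := by
  rw [sgnWord_eq_signedVal_comp]
  exact (signedVal_injective _).comp σ.1.injective

lemma negStat_sgnWord (σ : SignedPerm n) : negStat (sgnWord σ) = #(negValues σ) :=
  card_equiv σ.1 fun i => by by_cases h : σ.2 i <;> simp [sgnWord, negValues, h] <;> omega

lemma card_dnegSet (σ : SignedPerm n) :
    #(dnegSet σ) = #{a | signedVal (negValues σ) a < -1} :=
  card_equiv σ.1 fun i => by simp [dnegSet, sgnWord_eq_signedVal_comp]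

lemma sum_dnegSet (σ : SignedPerm n) :
    ∑ i ∈ dnegSet σ, ((sgnWord σ i).natAbs - 1) =
      ∑ a with signedVal (negValues σ) a < -1, ((signedVal (negValues σ) a).natAbs - 1) :=
  sum_equiv σ.1 (fun i => by simp [dnegSet, sgnWord_eq_signedVal_comp])
    fun i _ => by simp [sgnWord_eq_signedVal_comp]

/-- In a signed word with distinct absolute values, a pair has negative sum exactly when
its entry of larger absolute value is negative. -/
lemma nspStat_eq_card_natAbs_lt {w : Fin n → ℤ} (hw : Function.Injective (Int.natAbs ∘ w)) :
    nspStat w = #{p : Fin n × Fin n | (w p.1).natAbs < (w p.2).natAbs ∧ w p.2 < 0} := by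
  have hsymm : ∀ a b, w a + w b < 0 → w b + w a < 0 := fun a b h => by omega
  have h₁ := two_mul_card_filter_lt_and (k := id) Function.injective_id _ hsymm
  have h₂ := two_mul_card_filter_lt_and hw _ hsymm
  simp only [id, Function.comp_apply] at h₁ h₂
  rw [nspStat, Nat.eq_of_mul_eq_mul_left two_pos (h₁.trans h₂.symm)]
  exact congrArg card (filter_congr fun p _ => and_congr_right fun h => by omega)

lemma nspStat_sgnWord (σ : SignedPerm n) :
    nspStat (sgnWord σ) = ∑ i ∈ dnegSet σ, ((sgnWord σ i).natAbs - 1) := by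
  have hw : Function.Injective (Int.natAbs ∘ sgnWord σ) := fun i j h => by
    simp only [Function.comp_apply, natAbs_sgnWord] at h
    exact σ.1.injective (Fin.ext (by omega))
  have hcount : ∀ j, #{i | (sgnWord σ i).natAbs < (sgnWord σ j).natAbs} =
      (sgnWord σ j).natAbs - 1 := fun j => by
    simpa [natAbs_sgnWord] using card_filter_perm_lt σ.1 (σ.1 j)
  rw [nspStat_eq_card_natAbs_lt hw, card_filter, Fintype.sum_prod_type_right]
  calc _ = ∑ j with sgnWord σ j < 0, ((sgnWord σ j).natAbs - 1) := by
        rw [sum_filter]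
        refine sum_congr rfl fun j _ => ?_
        split_ifs with hj
        · simp only [hj, and_true, ← card_filter, hcount]
        · simp [hj]
    _ = _ := by
        refine (sum_subset (fun i hi => ?_) fun i hi hi' => ?_).symm
        · simp only [dnegSet, mem_filter, mem_univ, true_and] at hi ⊢
          omega
        · simp only [dnegSet, mem_filter, mem_univ, true_and, not_lt] at hi hi'
          rw [show sgnWord σ i = -1 by omega]
          rfl

end SignedPerm

section SignedPermEquiv

variable {n : ℕ}

lemma apply_mem_negValues (σ : SignedPerm n) (i : Fin n) :
    σ.1 i ∈ negValues σ ↔ σ.2 i = true := by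
  simp [negValues]

lemma range_sgnWord (σ : SignedPerm n) :
    Set.range (sgnWord σ) = Set.range (signedVal (negValues σ)) := by
  rw [sgnWord_eq_signedVal_comp, EquivLike.range_comp]

lemma standardize_sgnWord_lt_iff (σ : SignedPerm n) (i j : Fin n) :
    standardize (sgnWord σ) i < standardize (sgnWord σ) j ↔ sgnWord σ i < sgnWord σ j :=
  standardize_lt_standardize_iff (sgnWord_injective σ) i j

lemma standardize_sgnWord_negValues_injective :
    Function.Injective fun σ : SignedPerm n => (standardize (sgnWord σ), negValues σ) := by
  rintro σ σ' h
  obtain ⟨hstd, hneg⟩ := Prod.mk.inj h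
  have hword : sgnWord σ = sgnWord σ' :=
    eq_of_range_eq_of_lt_iff (sgnWord_injective σ) (by rw [range_sgnWord, range_sgnWord, hneg])
      fun i j => by rw [← standardize_sgnWord_lt_iff, ← standardize_sgnWord_lt_iff, hstd]
  have hperm : σ.1 = σ'.1 := by
    rw [sgnWord_eq_signedVal_comp, sgnWord_eq_signedVal_comp, hneg] at hword
    exact Equiv.ext fun i => signedVal_injective _ (congrFun hword i)
  refine Prod.ext hperm (funext fun i => Bool.eq_iff_iff.mpr ?_)
  rw [← apply_mem_negValues, ← apply_mem_negValues, hperm, hneg]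

noncomputable def signedPermEquiv (n : ℕ) :
    SignedPerm n ≃ Equiv.Perm (Fin n) × Finset (Fin n) :=
  Equiv.ofBijective _ <| (Fintype.bijective_iff_injective_and_card _).mpr
    ⟨standardize_sgnWord_negValues_injective, by simp [Fintype.card_perm]⟩

lemma sum_evenSigned {M : Type*} [AddCommMonoid M] (F : Equiv.Perm (Fin n) → Finset (Fin n) → M) :
    ∑ σ ∈ evenSigned n, F (standardize (sgnWord σ)) (negValues σ) =
      ∑ A : Finset (Fin n) with Even #A, ∑ s, F s A := by
  rw [← sum_product_right']
  exact sum_equiv (signedPermEquiv n) (fun σ => by simp [evenSigned, negStat_sgnWord,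
    signedPermEquiv]) fun σ _ => rfl

end SignedPermEquiv

/-- `(dstc, ℓ)` is equidistributed with `(ddes, dmaj)` on `D_n`. -/
theorem dstc_len_equidistributed_ddes_dmaj (n : ℕ) :
    ∑ σ ∈ evenSigned n, xP ^ dstc σ * qP ^ lenD σ =
      ∑ σ ∈ evenSigned n, xP ^ ddes σ * qP ^ dmaj σ := by
  let G (A : Finset (Fin n)) (a b : ℕ) : PP :=
    xP ^ (a + #{a | signedVal A a < -1}) *
      qP ^ (b + ∑ a with signedVal A a < -1, ((signedVal A a).natAbs - 1))
  have hstd (σ : SignedPerm n) := fun i j => (standardize_sgnWord_lt_iff σ i j).symm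
  calc ∑ σ ∈ evenSigned n, xP ^ dstc σ * qP ^ lenD σ
      = ∑ σ ∈ evenSigned n, G (negValues σ) (stcStat (standardize (sgnWord σ)))
          (invStat (standardize (sgnWord σ))) :=
        sum_congr rfl fun σ _ => by
          rw [dstc, lenD, nspStat_sgnWord, card_dnegSet, sum_dnegSet,
            stcStat_eq_of_lt_iff (hstd σ), invStat_eq_of_lt_iff (hstd σ)]
    _ = ∑ A : Finset (Fin n) with Even #A, ∑ s : Equiv.Perm (Fin n), G A (stcStat s) (invStat s) :=
        sum_evenSigned fun s A => G A (stcStat s) (invStat s)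
    _ = ∑ A : Finset (Fin n) with Even #A, ∑ s : Equiv.Perm (Fin n), G A (desStat s) (majStat s) :=
        sum_congr rfl fun A _ => sum_stcStat_invStat_eq_sum_desStat_majStat n (G A)
    _ = ∑ σ ∈ evenSigned n, G (negValues σ) (desStat (standardize (sgnWord σ)))
          (majStat (standardize (sgnWord σ))) :=
        (sum_evenSigned fun s A => G A (desStat s) (majStat s)).symm
    _ = ∑ σ ∈ evenSigned n, xP ^ ddes σ * qP ^ dmaj σ :=
        sum_congr rfl fun σ _ => by
          rw [ddes, dmaj, card_dnegSet, sum_dnegSet, desStat_eq_of_lt_iff (hstd σ),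
            majStat_eq_of_lt_iff (hstd σ)]
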